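/- arXiv:2409.11671 — 5 statements merged into one kernel-verified Lean document; each statement's English description precedes it below -/
import Mathlib

section
/- Let α₁,…,αₙ ≥ 0 with α_sum = Σⱼ αⱼ > 0, and let t* > 0. For probability vectors b₁, b₂ ∈ ℝⁿ with all entries at least t*, define cond(b)ⱼ = αⱼbⱼ / (Σᵢ αᵢbᵢ). Then ‖cond(b₁) − cond(b₂)‖₁ ≤ (α_max / (t*·α_sum)) · ‖b₁ − b₂‖₁, where α_max = maxⱼ αⱼ. -/
/-!
Both posteriors are probability vectors, so their ℓ¹ distance is twice the total positive part
of their difference, and likewise for the priors. Assuming by symmetry that b₁ has the larger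
normaliser S₁ = ∑ αᵢ b₁ᵢ, replacing S₂ by S₁ in the second posterior only decreases it, hence
cond(b₁)ⱼ - cond(b₂)ⱼ ≤ αⱼ (b₁ⱼ - b₂ⱼ) / S₁ ≤ α_max (b₁ⱼ - b₂ⱼ)⁺ / (t* α_sum), the last step
because every b₁ᵢ ≥ t* gives S₁ ≥ t* α_sum.
-/

open Finset

lemma Finset.sum_abs_eq_two_nsmul_sum_posPart {ι G : Type*} [Lattice G] [AddCommGroup G]
    [AddLeftMono G] (s : Finset ι) {f : ι → G} (hf : ∑ i ∈ s, f i = 0) :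
    ∑ i ∈ s, |f i| = 2 • ∑ i ∈ s, (f i)⁺ := by
  have h := sum_congr rfl fun i (_ : i ∈ s) => abs_add_eq_two_nsmul_posPart (f i)
  rwa [sum_add_distrib, hf, add_zero, ← smul_sum] at h

lemma Finset.mul_sum_le_sum_mul_of_le {ι R : Type*} [CommSemiring R] [PartialOrder R]
    [IsOrderedRing R] (s : Finset ι) {w b : ι → R} {t : R} (hw : ∀ i ∈ s, 0 ≤ w i)
    (hb : ∀ i ∈ s, t ≤ b i) : t * ∑ i ∈ s, w i ≤ ∑ i ∈ s, w i * b i := by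
  rw [mul_sum]
  exact sum_le_sum fun i hi => (mul_comm t (w i)).trans_le <|
    mul_le_mul_of_nonneg_left (hb i hi) (hw i hi)

section BayesCond

variable {ι : Type*} [Fintype ι] {α b b₁ b₂ : ι → ℝ}

noncomputable def bayesCond (α b : ι → ℝ) (j : ι) : ℝ :=
  α j * b j / ∑ i, α i * b i

lemma sum_bayesCond (h : ∑ i, α i * b i ≠ 0) : ∑ j, bayesCond α b j = 1 := by
  simp only [bayesCond, ← sum_div, div_self h]

lemma bayesCond_sub_bayesCond_le (j : ι) (hαj : 0 ≤ α j) (hb₂j : 0 ≤ b₂ j)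
    (hS₂ : 0 < ∑ i, α i * b₂ i) (hS : ∑ i, α i * b₂ i ≤ ∑ i, α i * b₁ i) :
    bayesCond α b₁ j - bayesCond α b₂ j ≤ α j * (b₁ j - b₂ j) / ∑ i, α i * b₁ i := by
  have h : α j * b₂ j / ∑ i, α i * b₁ i ≤ bayesCond α b₂ j :=
    div_le_div_of_nonneg_left (mul_nonneg hαj hb₂j) hS₂ hS
  rw [mul_sub, sub_div]
  exact sub_le_sub_left h _

lemma sum_abs_bayesCond_sub_le_of_le {M t : ℝ} (hα : ∀ j, 0 ≤ α j) (hM : ∀ j, α j ≤ M)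
    (ht : 0 < t) (hαsum : 0 < ∑ j, α j) (hb₁ : ∀ i, t ≤ b₁ i) (hb₂ : ∀ i, t ≤ b₂ i)
    (hb : ∑ i, b₁ i = ∑ i, b₂ i) (hS : ∑ i, α i * b₂ i ≤ ∑ i, α i * b₁ i) :
    ∑ j, |bayesCond α b₁ j - bayesCond α b₂ j| ≤ M / (t * ∑ j, α j) * ∑ j, |b₁ j - b₂ j| := by
  have htα : 0 < t * ∑ j, α j := mul_pos ht hαsum
  have hS₁ : t * ∑ j, α j ≤ ∑ i, α i * b₁ i :=
    mul_sum_le_sum_mul_of_le _ (fun i _ => hα i) fun i _ => hb₁ i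
  have hS₂ : t * ∑ j, α j ≤ ∑ i, α i * b₂ i :=
    mul_sum_le_sum_mul_of_le _ (fun i _ => hα i) fun i _ => hb₂ i
  have hpos : ∀ j, (bayesCond α b₁ j - bayesCond α b₂ j)⁺
      ≤ M / (t * ∑ j, α j) * (b₁ j - b₂ j)⁺ := by
    intro j
    have hM₀ : 0 ≤ M := (hα j).trans (hM j)
    refine sup_le ?_ (by positivity)
    calc bayesCond α b₁ j - bayesCond α b₂ j
        ≤ α j * (b₁ j - b₂ j) / ∑ i, α i * b₁ i :=
          bayesCond_sub_bayesCond_le j (hα j) (ht.le.trans (hb₂ j)) (htα.trans_le hS₂) hS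
      _ ≤ M * (b₁ j - b₂ j)⁺ / ∑ i, α i * b₁ i := by
          have hnum : α j * (b₁ j - b₂ j) ≤ M * (b₁ j - b₂ j)⁺ :=
            (mul_le_mul_of_nonneg_left (le_posPart _) (hα j)).trans
              (mul_le_mul_of_nonneg_right (hM j) (posPart_nonneg _))
          gcongr
          exact htα.le.trans hS₁
      _ ≤ M / (t * ∑ j, α j) * (b₁ j - b₂ j)⁺ := by
          rw [div_mul_eq_mul_div]
          gcongr
  have hcond : ∑ j, (bayesCond α b₁ j - bayesCond α b₂ j) = 0 := by
    rw [sum_sub_distrib, sum_bayesCond (htα.trans_le hS₁).ne',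
      sum_bayesCond (htα.trans_le hS₂).ne', sub_self]
  have hprior : ∑ j, (b₁ j - b₂ j) = 0 := by rw [sum_sub_distrib, hb, sub_self]
  rw [sum_abs_eq_two_nsmul_sum_posPart _ hcond, sum_abs_eq_two_nsmul_sum_posPart _ hprior,
    mul_smul_comm, mul_sum]
  gcongr with j
  exact hpos j

lemma sum_abs_bayesCond_sub_le {M t : ℝ} (hα : ∀ j, 0 ≤ α j) (hM : ∀ j, α j ≤ M)
    (ht : 0 < t) (hαsum : 0 < ∑ j, α j) (hb₁ : ∀ i, t ≤ b₁ i) (hb₂ : ∀ i, t ≤ b₂ i)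
    (hb : ∑ i, b₁ i = ∑ i, b₂ i) :
    ∑ j, |bayesCond α b₁ j - bayesCond α b₂ j| ≤ M / (t * ∑ j, α j) * ∑ j, |b₁ j - b₂ j| := by
  rcases le_total (∑ i, α i * b₂ i) (∑ i, α i * b₁ i) with hS | hS
  · exact sum_abs_bayesCond_sub_le_of_le hα hM ht hαsum hb₁ hb₂ hb hS
  · have h := sum_abs_bayesCond_sub_le_of_le hα hM ht hαsum hb₂ hb₁ hb.symm hS
    simp only [abs_sub_comm (b₂ _), abs_sub_comm (bayesCond α b₂ _)] at h
    exact h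

end BayesCond

/-- Lipschitz bound for the Bayesian conditioning map on belief vectors whose
entries are all at least t*. -/
theorem cond_lipschitz_bound
    (n : ℕ) [NeZero n] (α : Fin n → ℝ) (hα : ∀ j, 0 ≤ α j)
    (αsum αmax : ℝ)
    (hαsum : αsum = ∑ j, α j) (hαsum_pos : 0 < αsum)
    (hαmax : αmax = Finset.univ.sup' Finset.univ_nonempty α)
    (t : ℝ) (ht : 0 < t)
    (b₁ b₂ : Fin n → ℝ)
    (hb₁_lb : ∀ i, t ≤ b₁ i) (hb₁_sum : ∑ i, b₁ i = 1)
    (hb₂_lb : ∀ i, t ≤ b₂ i) (hb₂_sum : ∑ i, b₂ i = 1) :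
    ∑ j, |α j * b₁ j / (∑ i, α i * b₁ i) - α j * b₂ j / (∑ i, α i * b₂ i)|
      ≤ (αmax / (t * αsum)) * ∑ j, |b₁ j - b₂ j| := by
  subst hαsum hαmax
  exact sum_abs_bayesCond_sub_le hα (fun j => le_sup' α (mem_univ j)) ht hαsum_pos
    hb₁_lb hb₂_lb (hb₁_sum.trans hb₂_sum.symm)
end

section
/- Let T be an n×n row-stochastic matrix with all entries at least t* > 0, and let α₁,…,αₙ ≥ 0 with α_sum = Σⱼ αⱼ > 0 and α_max = maxⱼ αⱼ. Define τ(b) = Tᵀ·cond(b) where cond(b)ⱼ = αⱼbⱼ/(Σᵢ αᵢbᵢ). Then for any probability vectors b₁, b₂ with all entries at least t*, ‖τ(b₁) − τ(b₂)‖₁ ≤ ((1 − n·t*)·α_max / (t*·α_sum)) · ‖b₁ − b₂‖₁. -/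
/-!
Write `c = cond(b)`. Both `c₁ - c₂` and `b₁ - b₂` sum to zero, so their `ℓ¹` norms are twice the
sums of their positive parts. If `Σ αₖ b₂ₖ ≤ Σ αₖ b₁ₖ`, each coordinate of `c₁ - c₂` is at most
`αᵢ (b₁ᵢ - b₂ᵢ) / Σ αₖ b₁ₖ`; with `αᵢ ≤ α_max` and `Σ αₖ bₖ ≥ t* α_sum` this bounds
`‖c₁ - c₂‖₁` by `α_max ‖b₁ - b₂‖₁ / (t* α_sum)`. On vectors summing to zero, `Tᵀ` contracts the
`ℓ¹` norm by `1 - n t*`, since subtracting `t*` from every entry of `T` does not change `Tᵀ d`.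
-/

open Finset

section

variable {ι κ : Type*} [Fintype ι] [Fintype κ]

lemma sum_abs_eq_two_mul_sum_posPart {x : ι → ℝ} (h : ∑ i, x i = 0) :
    ∑ i, |x i| = 2 * ∑ i, (x i)⁺ := by
  have hx : ∀ i, |x i| = 2 * (x i)⁺ - x i := fun i => by
    linarith [abs_add_eq_two_nsmul_posPart (x i), two_nsmul (x i)⁺]
  simp_rw [hx, sum_sub_distrib, ← mul_sum, h, sub_zero]

lemma card_mul_le_one_of_le_of_sum_eq_one {r : κ → ℝ} {t : ℝ} (hr : ∀ j, t ≤ r j)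
    (hsum : ∑ j, r j = 1) : (Fintype.card κ : ℝ) * t ≤ 1 := by
  simpa [hsum] using sum_le_sum fun j (_ : j ∈ univ) => hr j

theorem sum_abs_sum_mul_le_of_sum_eq_zero (T : Matrix ι κ ℝ) {t : ℝ}
    (hT_entries : ∀ i j, t ≤ T i j) (hT_rows : ∀ i, ∑ j, T i j = 1)
    {d : ι → ℝ} (hd : ∑ i, d i = 0) :
    ∑ j, |∑ i, T i j * d i| ≤ (1 - Fintype.card κ * t) * ∑ i, |d i| := by
  have hshift : ∀ j, ∑ i, T i j * d i = ∑ i, (T i j - t) * d i := fun j => by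
    simp_rw [sub_mul, sum_sub_distrib, ← mul_sum, hd, mul_zero, sub_zero]
  have hrow : ∀ i, ∑ j, (T i j - t) = 1 - Fintype.card κ * t := fun i => by
    simp [sum_sub_distrib, hT_rows i]
  calc ∑ j, |∑ i, T i j * d i|
      ≤ ∑ j, ∑ i, (T i j - t) * |d i| := by
        refine sum_le_sum fun j _ => ?_
        rw [hshift]
        refine (abs_sum_le_sum_abs _ _).trans_eq (sum_congr rfl fun i _ => ?_)
        rw [abs_mul, abs_of_nonneg (sub_nonneg.2 (hT_entries i j))]
    _ = (1 - Fintype.card κ * t) * ∑ i, |d i| := by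
        simp_rw [sum_comm (γ := κ), ← sum_mul, hrow, ← mul_sum]

lemma mul_sum_le_sum_mul_of_le {α b : ι → ℝ} {t : ℝ} (hα : ∀ i, 0 ≤ α i)
    (hb : ∀ i, t ≤ b i) : t * ∑ i, α i ≤ ∑ i, α i * b i := by
  rw [mul_sum]
  exact sum_le_sum fun i _ => by rw [mul_comm]; exact mul_le_mul_of_nonneg_left (hb i) (hα i)

/-- The map `cond` of the informal statement. -/
noncomputable def reweight (α b : ι → ℝ) (i : ι) : ℝ :=
  α i * b i / ∑ k, α k * b k

lemma sum_reweight {α b : ι → ℝ} (h : ∑ k, α k * b k ≠ 0) : ∑ i, reweight α b i = 1 := by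
  simp only [reweight, ← sum_div]
  exact div_self h

lemma reweight_sub_reweight_le {α b₁ b₂ : ι → ℝ} (hα : ∀ i, 0 ≤ α i) (hb₂ : ∀ i, 0 ≤ b₂ i)
    (h₂ : 0 < ∑ k, α k * b₂ k) (h₂₁ : ∑ k, α k * b₂ k ≤ ∑ k, α k * b₁ k) (i : ι) :
    reweight α b₁ i - reweight α b₂ i ≤ α i * (b₁ i - b₂ i) / ∑ k, α k * b₁ k := by
  have : α i * b₂ i / ∑ k, α k * b₁ k ≤ reweight α b₂ i :=
    div_le_div_of_nonneg_left (mul_nonneg (hα i) (hb₂ i)) h₂ h₂₁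
  rw [mul_sub, sub_div]
  exact sub_le_sub_left this _

lemma sum_abs_reweight_sub_le_of_le {α b₁ b₂ : ι → ℝ} {a : ℝ} (hα : ∀ i, 0 ≤ α i)
    (ha : ∀ i, α i ≤ a) (hb₂ : ∀ i, 0 ≤ b₂ i) (hsum : ∑ i, b₁ i = ∑ i, b₂ i)
    (h₂ : 0 < ∑ k, α k * b₂ k) (h₂₁ : ∑ k, α k * b₂ k ≤ ∑ k, α k * b₁ k) :
    ∑ i, |reweight α b₁ i - reweight α b₂ i|
      ≤ a * (∑ i, |b₁ i - b₂ i|) / ∑ k, α k * b₁ k := by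
  set S₁ := ∑ k, α k * b₁ k
  have h₁ : 0 < S₁ := h₂.trans_le h₂₁
  have hc : ∑ i, (reweight α b₁ i - reweight α b₂ i) = 0 := by
    rw [sum_sub_distrib, sum_reweight h₁.ne', sum_reweight h₂.ne', sub_self]
  have hb : ∑ i, (b₁ i - b₂ i) = 0 := by rw [sum_sub_distrib, hsum, sub_self]
  have hpos : ∀ i, (reweight α b₁ i - reweight α b₂ i)⁺ ≤ a * (b₁ i - b₂ i)⁺ / S₁ := fun i => by
    have ha₀ : 0 ≤ a := (hα i).trans (ha i)
    refine sup_le ?_ (by positivity)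
    calc reweight α b₁ i - reweight α b₂ i
        ≤ α i * (b₁ i - b₂ i) / S₁ := reweight_sub_reweight_le hα hb₂ h₂ h₂₁ i
      _ ≤ a * (b₁ i - b₂ i)⁺ / S₁ := by
        refine div_le_div_of_nonneg_right ?_ h₁.le
        exact (mul_le_mul_of_nonneg_left (le_posPart _) (hα i)).trans
          (mul_le_mul_of_nonneg_right (ha i) (posPart_nonneg _))
  rw [sum_abs_eq_two_mul_sum_posPart hc, sum_abs_eq_two_mul_sum_posPart hb]
  calc 2 * ∑ i, (reweight α b₁ i - reweight α b₂ i)⁺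
      ≤ 2 * ∑ i, a * (b₁ i - b₂ i)⁺ / S₁ := by gcongr with i; exact hpos i
    _ = a * (2 * ∑ i, (b₁ i - b₂ i)⁺) / S₁ := by rw [← sum_div, ← mul_sum]; ring

theorem sum_abs_reweight_sub_le {α b₁ b₂ : ι → ℝ} {a m : ℝ} (hα : ∀ i, 0 ≤ α i)
    (ha : ∀ i, α i ≤ a) (hb₁ : ∀ i, 0 ≤ b₁ i) (hb₂ : ∀ i, 0 ≤ b₂ i)
    (hsum : ∑ i, b₁ i = ∑ i, b₂ i) (hm : 0 < m)
    (hm₁ : m ≤ ∑ k, α k * b₁ k) (hm₂ : m ≤ ∑ k, α k * b₂ k) :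
    ∑ i, |reweight α b₁ i - reweight α b₂ i| ≤ a * (∑ i, |b₁ i - b₂ i|) / m := by
  -- `ι` is nonempty, which gives `0 ≤ a`.
  obtain ⟨i₀, -, -⟩ := exists_ne_zero_of_sum_ne_zero (hm.trans_le hm₁).ne'
  have hD : 0 ≤ a * ∑ i, |b₁ i - b₂ i| :=
    mul_nonneg ((hα i₀).trans (ha i₀)) (sum_nonneg fun i _ => abs_nonneg _)
  rcases le_total (∑ k, α k * b₂ k) (∑ k, α k * b₁ k) with h | h
  · exact (sum_abs_reweight_sub_le_of_le hα ha hb₂ hsum (hm.trans_le hm₂) h).trans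
      (div_le_div_of_nonneg_left hD hm hm₁)
  · have := sum_abs_reweight_sub_le_of_le hα ha hb₁ hsum.symm (hm.trans_le hm₁) h
    simp_rw [abs_sub_comm (b₂ _), abs_sub_comm (reweight α b₂ _)] at this
    exact this.trans (div_le_div_of_nonneg_left hD hm hm₂)

end

/-- Contraction bound for the full belief update τ(b) = Tᵀ·cond(b). -/
theorem tau_contraction_bound
    (n : ℕ) [NeZero n] (T : Matrix (Fin n) (Fin n) ℝ) (t : ℝ) (ht : 0 < t)
    (hT_entries : ∀ i j, t ≤ T i j)
    (hT_rows : ∀ i, ∑ j, T i j = 1)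
    (α : Fin n → ℝ) (hα : ∀ j, 0 ≤ α j)
    (αsum αmax : ℝ)
    (hαsum : αsum = ∑ j, α j) (hαsum_pos : 0 < αsum)
    (hαmax : αmax = Finset.univ.sup' Finset.univ_nonempty α)
    (b₁ b₂ : Fin n → ℝ)
    (hb₁_lb : ∀ i, t ≤ b₁ i) (hb₁_sum : ∑ i, b₁ i = 1)
    (hb₂_lb : ∀ i, t ≤ b₂ i) (hb₂_sum : ∑ i, b₂ i = 1) :
    ∑ j, |(∑ i, T i j * (α i * b₁ i / (∑ k, α k * b₁ k)))
          - (∑ i, T i j * (α i * b₂ i / (∑ k, α k * b₂ k)))|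
      ≤ ((1 - (n : ℝ) * t) * αmax / (t * αsum)) * ∑ j, |b₁ j - b₂ j| := by
  change ∑ j, |∑ i, T i j * reweight α b₁ i - ∑ i, T i j * reweight α b₂ i| ≤ _
  have hS₁ : t * αsum ≤ ∑ k, α k * b₁ k := hαsum ▸ mul_sum_le_sum_mul_of_le hα hb₁_lb
  have hS₂ : t * αsum ≤ ∑ k, α k * b₂ k := hαsum ▸ mul_sum_le_sum_mul_of_le hα hb₂_lb
  have htα : 0 < t * αsum := mul_pos ht hαsum_pos
  have hαle : ∀ i, α i ≤ αmax := fun i => hαmax ▸ le_sup' α (mem_univ i)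
  have hcond := sum_abs_reweight_sub_le hα hαle (fun i => ht.le.trans (hb₁_lb i))
    (fun i => ht.le.trans (hb₂_lb i)) (hb₁_sum.trans hb₂_sum.symm) htα hS₁ hS₂
  have hd : ∑ i, (reweight α b₁ i - reweight α b₂ i) = 0 := by
    rw [sum_sub_distrib, sum_reweight (htα.trans_le hS₁).ne',
      sum_reweight (htα.trans_le hS₂).ne', sub_self]
  have hnt : (n : ℝ) * t ≤ 1 := by
    simpa using card_mul_le_one_of_le_of_sum_eq_one (hT_entries 0) (hT_rows 0)
  have hT := sum_abs_sum_mul_le_of_sum_eq_zero T hT_entries hT_rows hd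
  rw [Fintype.card_fin] at hT
  simp_rw [← sum_sub_distrib, ← mul_sub]
  calc _ ≤ (1 - (n : ℝ) * t) * ∑ i, |reweight α b₁ i - reweight α b₂ i| := hT
    _ ≤ (1 - (n : ℝ) * t) * (αmax * (∑ j, |b₁ j - b₂ j|) / (t * αsum)) :=
      mul_le_mul_of_nonneg_left hcond (sub_nonneg.2 hnt)
    _ = _ := by ring
end

section
/- Let b, b' ∈ ℝⁿ be probability vectors with ‖b − b'‖₁ ≤ λ, and for each a in a finite set A₂ and each i ∈ [n] let πᵢ(a) ∈ [0,1] with Σₐ πᵢ(a) = 1 for each i. Let R : A₂ → ℝ with |R(a)| ≤ R_max for all a. Then |Σₐ (Σᵢ bᵢπᵢ(a))·R(a) − Σₐ (Σᵢ b'ᵢπᵢ(a))·R(a)| ≤ R_max · α_max · λ, where α_max = Σₐ maxᵢ πᵢ(a). -/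
/-! The difference of the two expected rewards is `∑ₐ (∑ᵢ (bᵢ - b'ᵢ) πᵢ(a)) R(a)`, and each inner
sum is bounded in absolute value by `(maxᵢ πᵢ(a)) · ‖b - b'‖₁ ≤ (maxᵢ πᵢ(a)) · λ`. -/

open Finset

section

variable {ι 𝕜 : Type*} [CommRing 𝕜] [LinearOrder 𝕜] [IsStrictOrderedRing 𝕜]

theorem abs_sum_mul_le_mul_sum_abs {s : Finset ι} {f g : ι → 𝕜} {M : 𝕜}
    (hg : ∀ i ∈ s, |g i| ≤ M) : |∑ i ∈ s, f i * g i| ≤ M * ∑ i ∈ s, |f i| :=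
  calc |∑ i ∈ s, f i * g i| ≤ ∑ i ∈ s, |f i| * |g i| := by
        simpa only [abs_mul] using abs_sum_le_sum_abs (fun i => f i * g i) s
    _ ≤ ∑ i ∈ s, |f i| * M := sum_le_sum fun i hi => by gcongr; exact hg i hi
    _ = M * ∑ i ∈ s, |f i| := by rw [← sum_mul, mul_comm]

theorem abs_sum_mul_le_sum_mul_of_abs_le {s : Finset ι} {w c r : ι → 𝕜} {rmax : 𝕜}
    (hw : ∀ i ∈ s, |w i| ≤ c i) (hr : ∀ i ∈ s, |r i| ≤ rmax) :
    |∑ i ∈ s, w i * r i| ≤ ∑ i ∈ s, c i * rmax :=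
  (abs_sum_le_sum_abs _ s).trans <| sum_le_sum fun i hi => by
    rw [abs_mul]
    exact mul_le_mul (hw i hi) (hr i hi) (abs_nonneg _) ((abs_nonneg _).trans (hw i hi))

end

theorem reward_discrepancy_bound_general
    (n : ℕ) [NeZero n] (A₂ : Type*) [Fintype A₂]
    (b b' : Fin n → ℝ)
    (lam : ℝ) (htv : ∑ i, |b i - b' i| ≤ lam)
    (π : Fin n → A₂ → ℝ)
    (hπ_mem : ∀ i a, π i a ∈ Set.Icc (0 : ℝ) 1)
    (R : A₂ → ℝ) (Rmax : ℝ) (hR : ∀ a, |R a| ≤ Rmax)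
    (αmax : ℝ)
    (hαmax : αmax = ∑ a, Finset.univ.sup' Finset.univ_nonempty (fun i => π i a)) :
    |(∑ a, (∑ i, b i * π i a) * R a) - (∑ a, (∑ i, b' i * π i a) * R a)|
      ≤ Rmax * αmax * lam := by
  set M : A₂ → ℝ := fun a => univ.sup' univ_nonempty (fun i => π i a)
  have hπ_le_M (i : Fin n) (a : A₂) : |π i a| ≤ M a := by
    rw [abs_of_nonneg (hπ_mem i a).1]
    exact le_sup' (fun i => π i a) (mem_univ i)
  have hM_nonneg (a : A₂) : 0 ≤ M a := (abs_nonneg _).trans (hπ_le_M 0 a)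
  have hweight (a : A₂) : |∑ i, (b i - b' i) * π i a| ≤ M a * lam :=
    (abs_sum_mul_le_mul_sum_abs fun i _ => hπ_le_M i a).trans
      (mul_le_mul_of_nonneg_left htv (hM_nonneg a))
  calc |(∑ a, (∑ i, b i * π i a) * R a) - (∑ a, (∑ i, b' i * π i a) * R a)|
      = |∑ a, (∑ i, (b i - b' i) * π i a) * R a| := by
        simp only [sub_mul, sum_sub_distrib]
    _ ≤ ∑ a, M a * lam * Rmax :=
        abs_sum_mul_le_sum_mul_of_abs_le (fun a _ => hweight a) (fun a _ => hR a)
    _ = Rmax * αmax * lam := by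
        rw [hαmax, ← sum_mul, ← sum_mul]; ring

/-- Reward discrepancy bound: the expected rewards under two beliefs at
total-variation distance ≤ λ differ by at most R_max · α_max · λ. -/
theorem reward_discrepancy_bound
    (n : ℕ) [NeZero n] (A₂ : Type*) [Fintype A₂]
    (b b' : Fin n → ℝ)
    (hb_nonneg : ∀ i, 0 ≤ b i) (hb_sum : ∑ i, b i = 1)
    (hb'_nonneg : ∀ i, 0 ≤ b' i) (hb'_sum : ∑ i, b' i = 1)
    (lam : ℝ) (htv : ∑ i, |b i - b' i| ≤ lam)
    (π : Fin n → A₂ → ℝ)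
    (hπ_mem : ∀ i a, π i a ∈ Set.Icc (0 : ℝ) 1)
    (hπ_sum : ∀ i, ∑ a, π i a = 1)
    (R : A₂ → ℝ) (Rmax : ℝ) (hR : ∀ a, |R a| ≤ Rmax)
    (αmax : ℝ)
    (hαmax : αmax = ∑ a, Finset.univ.sup' Finset.univ_nonempty (fun i => π i a)) :
    |(∑ a, (∑ i, b i * π i a) * R a) - (∑ a, (∑ i, b' i * π i a) * R a)|
      ≤ Rmax * αmax * lam :=
  reward_discrepancy_bound_general n A₂ b b' lam htv π hπ_mem R Rmax hR αmax hαmax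
end

section
/- Let T_A and T_D be n×n row-stochastic matrices, and let b₁', b₂' be probability vectors in ℝⁿ. Suppose all entries of T_A are at least t_a* > 0 and all entries of T_D are at least t_d* > 0. Then ‖T_Aᵀb₁' − T_Dᵀb₂'‖₁ ≤ (1 − n·max(t_a*, t_d*))·‖b₁' − b₂'‖₁ + ‖(T_A − T_D)ᵀ‖₁, where ‖Q‖₁ denotes the induced L1 matrix norm (maximum absolute column sum). -/
/-!
Write `T_Aᵀ b₁ - T_Dᵀ b₂ = T_Aᵀ (b₁ - b₂) + (T_A - T_D)ᵀ b₂`. The first term contracts: since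
`b₁ - b₂` sums to zero, lowering every entry of `T_A` by its lower bound `t` does not change
`T_Aᵀ (b₁ - b₂)`, and it leaves a nonnegative matrix whose rows sum to `1 - n t`.
The second term is a convex combination of rows of `T_A - T_D`, hence bounded by the largest row
sum. By symmetry the roles of `T_A` and `T_D` may be exchanged, which gives `max t_a t_d`.
-/

open Finset

variable {ι κ : Type*} [Fintype ι] [Fintype κ]

theorem sum_abs_sum_mul_le_sup'_rowSum [Nonempty ι] (Q : Matrix ι κ ℝ) {b : ι → ℝ}
    (hb_nonneg : ∀ i, 0 ≤ b i) (hb_sum : ∑ i, b i = 1) :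
    ∑ j, |∑ i, Q i j * b i| ≤ univ.sup' univ_nonempty (fun i => ∑ j, |Q i j|) := by
  set S := univ.sup' univ_nonempty (fun i => ∑ j, |Q i j|)
  calc ∑ j, |∑ i, Q i j * b i| ≤ ∑ j, ∑ i, |Q i j| * b i :=
        sum_le_sum fun j _ => (abs_sum_le_sum_abs _ _).trans_eq <| by
          simp only [abs_mul, abs_of_nonneg (hb_nonneg _)]
    _ = ∑ i, b i * ∑ j, |Q i j| := by
        rw [sum_comm]; simp only [mul_sum, mul_comm]
    _ ≤ ∑ i, b i * S :=
        sum_le_sum fun i _ =>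
          mul_le_mul_of_nonneg_left (le_sup' (fun i => ∑ j, |Q i j|) (mem_univ i)) (hb_nonneg i)
    _ = S := by rw [← sum_mul, hb_sum, one_mul]

theorem sum_abs_sub_sum_mul_le [Nonempty ι] (TA TD : Matrix ι ι ℝ) {t : ℝ}
    (hTA_entries : ∀ i j, t ≤ TA i j) (hTA_rows : ∀ i, ∑ j, TA i j = 1)
    {b₁ b₂ : ι → ℝ} (hb₁_sum : ∑ i, b₁ i = 1)
    (hb₂_nonneg : ∀ i, 0 ≤ b₂ i) (hb₂_sum : ∑ i, b₂ i = 1) :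
    ∑ j, |(∑ i, TA i j * b₁ i) - (∑ i, TD i j * b₂ i)|
      ≤ (1 - Fintype.card ι * t) * (∑ i, |b₁ i - b₂ i|)
        + univ.sup' univ_nonempty (fun j => ∑ i, |TA j i - TD j i|) := by
  have split : ∀ j, (∑ i, TA i j * b₁ i) - (∑ i, TD i j * b₂ i)
      = (∑ i, TA i j * (b₁ i - b₂ i)) + ∑ i, (TA - TD) i j * b₂ i := fun j => by
    simp only [Matrix.sub_apply, ← sum_add_distrib, ← sum_sub_distrib]
    exact sum_congr rfl fun i _ => by ring
  have contraction := sum_abs_sum_mul_le_of_sum_eq_zero TA hTA_entries hTA_rows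
    (d := b₁ - b₂) (by simp [sum_sub_distrib, hb₁_sum, hb₂_sum])
  have perturbation := sum_abs_sum_mul_le_sup'_rowSum (TA - TD) hb₂_nonneg hb₂_sum
  calc ∑ j, |(∑ i, TA i j * b₁ i) - (∑ i, TD i j * b₂ i)|
      ≤ ∑ j, (|∑ i, TA i j * (b₁ i - b₂ i)| + |∑ i, (TA - TD) i j * b₂ i|) :=
        sum_le_sum fun j _ => by rw [split]; exact abs_add_le _ _
    _ ≤ _ := by
        rw [sum_add_distrib]
        exact add_le_add contraction perturbation

theorem two_matrix_update_bound_general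
    (n : ℕ) [NeZero n] (TA TD : Matrix (Fin n) (Fin n) ℝ)
    (ta td : ℝ)
    (hTA_entries : ∀ i j, ta ≤ TA i j) (hTA_rows : ∀ i, ∑ j, TA i j = 1)
    (hTD_entries : ∀ i j, td ≤ TD i j) (hTD_rows : ∀ i, ∑ j, TD i j = 1)
    (b₁ b₂ : Fin n → ℝ)
    (hb₁_nonneg : ∀ i, 0 ≤ b₁ i) (hb₁_sum : ∑ i, b₁ i = 1)
    (hb₂_nonneg : ∀ i, 0 ≤ b₂ i) (hb₂_sum : ∑ i, b₂ i = 1) :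
    ∑ j, |(∑ i, TA i j * b₁ i) - (∑ i, TD i j * b₂ i)|
      ≤ (1 - (n : ℝ) * max ta td) * (∑ i, |b₁ i - b₂ i|)
        + Finset.univ.sup' Finset.univ_nonempty
            (fun j => ∑ i, |TA j i - TD j i|) := by
  rcases le_total td ta with h | h
  · simpa [max_eq_left h] using
      sum_abs_sub_sum_mul_le TA TD hTA_entries hTA_rows hb₁_sum hb₂_nonneg hb₂_sum
  · simpa [max_eq_right h, abs_sub_comm] using
      sum_abs_sub_sum_mul_le TD TA hTD_entries hTD_rows hb₂_sum hb₁_nonneg hb₁_sum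

/-- Bound on the TV distance between updates under two different row-stochastic
matrices: contraction plus an additive term given by the induced L1 norm of the
difference of transposes (maximum absolute column sum). -/
theorem two_matrix_update_bound
    (n : ℕ) [NeZero n] (TA TD : Matrix (Fin n) (Fin n) ℝ)
    (ta td : ℝ) (hta : 0 < ta) (htd : 0 < td)
    (hTA_entries : ∀ i j, ta ≤ TA i j) (hTA_rows : ∀ i, ∑ j, TA i j = 1)
    (hTD_entries : ∀ i j, td ≤ TD i j) (hTD_rows : ∀ i, ∑ j, TD i j = 1)
    (b₁ b₂ : Fin n → ℝ)
    (hb₁_nonneg : ∀ i, 0 ≤ b₁ i) (hb₁_sum : ∑ i, b₁ i = 1)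
    (hb₂_nonneg : ∀ i, 0 ≤ b₂ i) (hb₂_sum : ∑ i, b₂ i = 1) :
    ∑ j, |(∑ i, TA i j * b₁ i) - (∑ i, TD i j * b₂ i)|
      ≤ (1 - (n : ℝ) * max ta td) * (∑ i, |b₁ i - b₂ i|)
        + Finset.univ.sup' Finset.univ_nonempty
            (fun j => ∑ i, |TA j i - TD j i|) :=
  two_matrix_update_bound_general n TA TD ta td hTA_entries hTA_rows hTD_entries hTD_rows b₁ b₂
    hb₁_nonneg hb₁_sum hb₂_nonneg hb₂_sum
end

section
/- Let b₁, b₂ ∈ ℝⁿ be probability vectors with all entries at least t_min > 0, and α₁,…,αₙ ≥ 0 with α_sum = Σⱼαⱼ > 0 and α_max = maxⱼαⱼ. Then ‖cond(b₁) − cond(b₂)‖₁ ≤ (α_max/(t_min·α_sum))·‖b₁ − b₂‖₁, where cond(b)ⱼ = αⱼbⱼ/(Σᵢαᵢbᵢ), using the inequality |x/X − y/Y| ≤ (1/min(X,Y))·|x − y| valid when x/X, y/Y normalize probability vectors componentwise with X, Y ≥ t_min·α_sum. -/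
/-!
Write `X = ∑ αᵢ b₁ᵢ`, `Y = ∑ αᵢ b₂ᵢ`, `Δ = b₁ - b₂` and `q = α b₂ / Y`, a probability vector. Then
`α b₁ / X - α b₂ / Y = (α Δ - q (X - Y)) / X`, so the `ℓ¹` distance is at most
`(∑ αⱼ |Δⱼ| + |X - Y|) / X`. Since `∑ Δ = 0`, `X - Y = ∑ αⱼ Δⱼ = -∑ (α_max - αⱼ) Δⱼ`, and the two
sums combine to `α_max ∑ |Δⱼ|`. Finally `X ≥ t_min α_sum`.
-/

open Finset

section

variable {ι : Type*} [Fintype ι]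

theorem abs_sum_mul_le_of_sum_eq_zero {α Δ : ι → ℝ} {M : ℝ} (hαM : ∀ k, α k ≤ M)
    (hΔ : ∑ k, Δ k = 0) : |∑ k, α k * Δ k| ≤ ∑ k, (M - α k) * |Δ k| := by
  have hneg : ∑ k, α k * Δ k = -∑ k, (M - α k) * Δ k := by
    simp only [sub_mul, sum_sub_distrib, ← mul_sum, hΔ]
    ring
  rw [hneg, abs_neg]
  refine (abs_sum_le_sum_abs _ _).trans_eq (sum_congr rfl fun k _ => ?_)
  rw [abs_mul, abs_of_nonneg (sub_nonneg.2 (hαM k))]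

theorem sum_abs_div_sum_mul_sub_le {α x y : ι → ℝ} {M : ℝ} (hα : ∀ k, 0 ≤ α k)
    (hαM : ∀ k, α k ≤ M) (hy : ∀ k, 0 ≤ y k) (hX : 0 < ∑ i, α i * x i)
    (hY : 0 < ∑ i, α i * y i) (hxy : ∑ i, x i = ∑ i, y i) :
    ∑ j, |α j * x j / (∑ i, α i * x i) - α j * y j / (∑ i, α i * y i)|
      ≤ (M * ∑ j, |x j - y j|) / ∑ i, α i * x i := by
  set X := ∑ i, α i * x i
  set Y := ∑ i, α i * y i
  set q : ι → ℝ := fun j => α j * y j / Y with hq_def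
  have hq : ∀ j, 0 ≤ q j := fun j => div_nonneg (mul_nonneg (hα j) (hy j)) hY.le
  have hq_sum : ∑ j, q j = 1 := by
    rw [hq_def, ← sum_div, div_self hY.ne']
  have hXY : |X - Y| ≤ ∑ k, (M - α k) * |x k - y k| := by
    have hsub : X - Y = ∑ k, α k * (x k - y k) := by simp only [X, Y, mul_sub, sum_sub_distrib]
    rw [hsub]
    exact abs_sum_mul_le_of_sum_eq_zero hαM (by rw [sum_sub_distrib, hxy, sub_self])
  have hterm : ∀ j, |α j * x j / X - α j * y j / Y| ≤ (α j * |x j - y j| + q j * |X - Y|) / X := by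
    intro j
    have hid : α j * x j / X - α j * y j / Y = (α j * (x j - y j) - q j * (X - Y)) / X := by
      simp only [q]
      field_simp
      ring
    rw [hid, abs_div, abs_of_pos hX]
    gcongr
    refine (abs_sub _ _).trans_eq ?_
    rw [abs_mul, abs_mul, abs_of_nonneg (hα j), abs_of_nonneg (hq j)]
  calc ∑ j, |α j * x j / X - α j * y j / Y|
      ≤ ∑ j, (α j * |x j - y j| + q j * |X - Y|) / X := sum_le_sum fun j _ => hterm j
    _ = (∑ j, α j * |x j - y j| + |X - Y|) / X := by
        rw [← sum_div, sum_add_distrib, ← sum_mul, hq_sum, one_mul]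
    _ ≤ (∑ j, α j * |x j - y j| + ∑ k, (M - α k) * |x k - y k|) / X := by gcongr
    _ = (M * ∑ j, |x j - y j|) / X := by
        rw [← sum_add_distrib, mul_sum]
        exact congrArg (· / X) (sum_congr rfl fun k _ => by ring)

end

/-- Lipschitz bound for conditioning under two beliefs whose entries are at
least t_min: ‖cond(b₁) − cond(b₂)‖₁ ≤ (α_max/(t_min·α_sum))·‖b₁ − b₂‖₁. -/
theorem cond_lipschitz_tmin_bound
    (n : ℕ) [NeZero n] (α : Fin n → ℝ) (hα : ∀ j, 0 ≤ α j)
    (αsum αmax : ℝ)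
    (hαsum : αsum = ∑ j, α j) (hαsum_pos : 0 < αsum)
    (hαmax : αmax = Finset.univ.sup' Finset.univ_nonempty α)
    (tmin : ℝ) (htmin : 0 < tmin)
    (b₁ b₂ : Fin n → ℝ)
    (hb₁_lb : ∀ i, tmin ≤ b₁ i) (hb₁_sum : ∑ i, b₁ i = 1)
    (hb₂_lb : ∀ i, tmin ≤ b₂ i) (hb₂_sum : ∑ i, b₂ i = 1) :
    ∑ j, |α j * b₁ j / (∑ i, α i * b₁ i) - α j * b₂ j / (∑ i, α i * b₂ i)|
      ≤ (αmax / (tmin * αsum)) * ∑ j, |b₁ j - b₂ j| := by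
  have hα_le : ∀ j, α j ≤ αmax := fun j => hαmax ▸ le_sup' α (mem_univ j)
  have hαmax_nonneg : 0 ≤ αmax := (hα 0).trans (hα_le 0)
  have hdenom_lb : ∀ b : Fin n → ℝ, (∀ i, tmin ≤ b i) → tmin * αsum ≤ ∑ i, α i * b i :=
    fun b hb => by
      rw [hαsum, mul_sum]
      exact sum_le_sum fun i _ => by nlinarith [hα i, hb i]
  have hm : 0 < tmin * αsum := mul_pos htmin hαsum_pos
  have hX := hdenom_lb b₁ hb₁_lb
  calc _ ≤ (αmax * ∑ j, |b₁ j - b₂ j|) / ∑ i, α i * b₁ i :=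
        sum_abs_div_sum_mul_sub_le hα hα_le (fun k => htmin.le.trans (hb₂_lb k))
          (hm.trans_le hX) (hm.trans_le (hdenom_lb b₂ hb₂_lb)) (hb₁_sum.trans hb₂_sum.symm)
    _ ≤ (αmax * ∑ j, |b₁ j - b₂ j|) / (tmin * αsum) := by gcongr
    _ = (αmax / (tmin * αsum)) * ∑ j, |b₁ j - b₂ j| := by ring
end
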